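/- arXiv:1910.01195 — 4 statements merged into one kernel-verified Lean document; each statement's English description precedes it below -/
import Mathlib

section
/- Let I₀ ⊆ ℝ be an open interval, V : ℝ → ℝ be twice continuously differentiable, a < b real numbers, and α, β : I₀ → (a, b) continuous functions such that for every E ∈ I₀: α(E) < β(E), V(α(E)) = V(β(E)) = E, V'(α(E)) < 0, V'(β(E)) > 0, and for x ∈ [a, b] one has V(x) < E if and only if α(E) < x < β(E). Then the action integral 𝒜(E) := ∫_{α(E)}^{β(E)} √(E − V(t)) dt is differentiable on I₀, with 𝒜'(E) = (1/2) ∫_{α(E)}^{β(E)} (E − V(x))^(−1/2) dx (a convergent improper integral), and 𝒜'(E) > 0 for every E ∈ I₀. -/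
/-!
With the convention `x ^ (-1/2) = 0` for `x ≤ 0`, put `G u = ∫_a^b (u - V t) ^ (-1/2) dt`.
Since `∫_s^r (u - c) ^ (-1/2) du = 2 √(r - c) - 2 √(s - c)` for every `c`, Fubini gives
`𝒜 r - 𝒜 s = ½ ∫_s^r G`, so by the fundamental theorem of calculus it suffices that `G` is
continuous. Near an energy `e`, cut `[α (e + δ), β (e + δ)]` at the turning points `α (e - δ)`,
`β (e - δ)`. On the middle piece `u - V ≥ u - (e - δ)` is bounded below, so that part is continuous
by dominated convergence. On the outer pieces `|V'| ≥ m > 0`, hence `u - V t ≥ m |t - c|` wherever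
`V t < u`, `c` being the turning point at energy `u`; so each piece contributes at most
`2 m^(-1/2) √(length)`, which tends to `0` with `δ` because `α` and `β` are continuous.
-/

open Set MeasureTheory Topology Filter

lemma rpow_neg_half_of_nonpos {x : ℝ} (hx : x ≤ 0) : x ^ (-(1 : ℝ) / 2) = 0 := by
  rcases hx.lt_or_eq with hx | rfl
  · rw [Real.rpow_def_of_neg hx, show -(1 : ℝ) / 2 * Real.pi = -(Real.pi / 2) by ring,
      Real.cos_neg, Real.cos_pi_div_two, mul_zero]
  · exact Real.zero_rpow (by norm_num)

lemma rpow_neg_half_nonneg (x : ℝ) : 0 ≤ x ^ (-(1 : ℝ) / 2) := by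
  rcases le_or_gt x 0 with hx | hx
  · rw [rpow_neg_half_of_nonpos hx]
  · exact Real.rpow_nonneg hx.le _

/-- Both sides vanish where the base is negative, so no condition on `c` is needed. -/
lemma integral_sub_rpow_neg_half (c s r : ℝ) :
    ∫ u in s..r, (u - c) ^ (-(1 : ℝ) / 2) = 2 * √(r - c) - 2 * √(s - c) := by
  rw [intervalIntegral.integral_comp_sub_right (· ^ (-(1 : ℝ) / 2)) c,
    integral_rpow (Or.inl (by norm_num)), Real.sqrt_eq_rpow, Real.sqrt_eq_rpow]
  norm_num
  ring

lemma intervalIntegrable_sub_rpow_neg_half (c s r : ℝ) :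
    IntervalIntegrable (fun u => (u - c) ^ (-(1 : ℝ) / 2)) volume s r := by
  simpa using (intervalIntegral.intervalIntegrable_rpow' (r := -(1 : ℝ) / 2) (by norm_num)
    (a := s - c) (b := r - c)).comp_sub_right c

section SimpleTurningPoint

variable {V : ℝ → ℝ} {m p q c : ℝ}

lemma rpow_neg_half_sub_le_of_deriv_le (hV : Differentiable ℝ V) (hm : 0 < m)
    (hd : ∀ t ∈ Icc p q, deriv V t ≤ -m) (hc : c ∈ Icc p q) {t : ℝ} (ht : t ∈ Icc p q) :
    (V c - V t) ^ (-(1 : ℝ) / 2) ≤ m ^ (-(1 : ℝ) / 2) * (t - c) ^ (-(1 : ℝ) / 2) := by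
  have hslope : ∀ x ∈ Icc p q, ∀ y ∈ Icc p q, x ≤ y → V y - V x ≤ -m * (y - x) :=
    (convex_Icc p q).image_sub_le_mul_sub_of_deriv_le hV.continuous.continuousOn
      hV.differentiableOn (fun x hx => hd x (interior_subset hx))
  rcases le_or_gt t c with htc | hct
  · have := hslope t ht c hc htc
    rw [rpow_neg_half_of_nonpos (by nlinarith)]
    exact mul_nonneg (rpow_neg_half_nonneg m) (rpow_neg_half_nonneg _)
  · have hlow : m * (t - c) ≤ V c - V t := by linarith [hslope c hc t ht hct.le]
    rw [← Real.mul_rpow hm.le (sub_nonneg.2 hct.le)]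
    exact Real.rpow_le_rpow_of_nonpos (mul_pos hm (sub_pos.2 hct)) hlow (by norm_num)

lemma intervalIntegrable_and_integral_le_of_deriv_le (hV : Differentiable ℝ V) (hm : 0 < m)
    (hpq : p ≤ q) (hd : ∀ t ∈ Icc p q, deriv V t ≤ -m) (hc : c ∈ Icc p q) :
    IntervalIntegrable (fun t => (V c - V t) ^ (-(1 : ℝ) / 2)) volume p q ∧
      ∫ t in p..q, (V c - V t) ^ (-(1 : ℝ) / 2) ≤ 2 * m ^ (-(1 : ℝ) / 2) * √(q - p) := by
  have hg := (intervalIntegrable_sub_rpow_neg_half c p q).const_mul (m ^ (-(1 : ℝ) / 2))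
  have hle : ∀ t ∈ Icc p q, (V c - V t) ^ (-(1 : ℝ) / 2)
      ≤ m ^ (-(1 : ℝ) / 2) * (t - c) ^ (-(1 : ℝ) / 2) :=
    fun t ht => rpow_neg_half_sub_le_of_deriv_le hV hm hd hc ht
  have hf : IntervalIntegrable (fun t => (V c - V t) ^ (-(1 : ℝ) / 2)) volume p q := by
    refine hg.mono_fun'
      ((measurable_const.sub hV.continuous.measurable).pow_const _).aestronglyMeasurable ?_
    rw [uIoc_of_le hpq, EventuallyLE, ae_restrict_iff' measurableSet_Ioc]
    exact .of_forall fun t ht => by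
      rw [Real.norm_of_nonneg (rpow_neg_half_nonneg _)]
      exact hle t (Ioc_subset_Icc_self ht)
  refine ⟨hf, (intervalIntegral.integral_mono_on hpq hf hg hle).trans ?_⟩
  rw [intervalIntegral.integral_const_mul, integral_sub_rpow_neg_half,
    show √(p - c) = 0 from Real.sqrt_eq_zero'.2 (by linarith [hc.1])]
  have := Real.sqrt_le_sqrt (show q - c ≤ q - p by linarith [hc.1])
  nlinarith [rpow_neg_half_nonneg m]

lemma intervalIntegrable_and_integral_le_of_le_deriv (hV : Differentiable ℝ V) (hm : 0 < m)
    (hpq : p ≤ q) (hd : ∀ t ∈ Icc p q, m ≤ deriv V t) (hc : c ∈ Icc p q) :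
    IntervalIntegrable (fun t => (V c - V t) ^ (-(1 : ℝ) / 2)) volume p q ∧
      ∫ t in p..q, (V c - V t) ^ (-(1 : ℝ) / 2) ≤ 2 * m ^ (-(1 : ℝ) / 2) * √(q - p) := by
  have hd' : ∀ t ∈ Icc (-q) (-p), deriv (fun x => V (-x)) t ≤ -m := fun t ht => by
    rw [deriv_comp_neg]
    linarith [hd (-t) ⟨by linarith [ht.2], by linarith [ht.1]⟩]
  obtain ⟨hi, hle⟩ := intervalIntegrable_and_integral_le_of_deriv_le (V := fun x => V (-x))
    (hV.comp differentiable_neg) hm (neg_le_neg hpq) hd' (c := -c)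
    ⟨by linarith [hc.2], by linarith [hc.1]⟩
  simp only [neg_neg] at hi hle
  rw [intervalIntegral.integral_comp_neg (fun t => (V c - V t) ^ (-(1 : ℝ) / 2)), neg_neg,
    neg_neg, sub_neg_eq_add, neg_add_eq_sub] at hle
  exact ⟨((IntervalIntegrable.iff_comp_neg (a := q) (b := p)
    (f := fun t => (V c - V t) ^ (-(1 : ℝ) / 2))).2 hi).symm, hle⟩

end SimpleTurningPoint

section SimpleWell

variable {V : ℝ → ℝ}

lemma continuousAt_intervalIntegral_rpow_neg_half (hV : Continuous V) {p q c e : ℝ}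
    (hce : c < e) (hc : ∀ t ∈ uIcc p q, V t ≤ c) :
    ContinuousAt (fun u => ∫ t in p..q, (u - V t) ^ (-(1 : ℝ) / 2)) e := by
  refine intervalIntegral.continuousAt_of_dominated_interval
    (bound := fun _ => ((e - c) / 2) ^ (-(1 : ℝ) / 2))
    (.of_forall fun u => ((measurable_const.sub hV.measurable).pow_const _).aestronglyMeasurable) ?_
    intervalIntegrable_const (.of_forall fun t ht => ?_)
  · filter_upwards [lt_mem_nhds (show (c + e) / 2 < e by linarith)] with u hu
    refine .of_forall fun t ht => ?_
    have := hc t (uIoc_subset_uIcc ht)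
    rw [Real.norm_of_nonneg (rpow_neg_half_nonneg _)]
    exact Real.rpow_le_rpow_of_nonpos (by linarith) (by linarith) (by norm_num)
  · have := hc t (uIoc_subset_uIcc ht)
    exact (continuousAt_id.sub continuousAt_const).rpow_const (Or.inl (by simp; linarith))

lemma intervalIntegrable_and_abs_integral_sub_le (hV : Differentiable ℝ V)
    {P p q Q c₁ c₂ u mα mβ : ℝ} (hmα : 0 < mα) (hmβ : 0 < mβ)
    (hPp : P ≤ p) (hpq : p ≤ q) (hqQ : q ≤ Q)
    (hdα : ∀ t ∈ Icc P p, deriv V t ≤ -mα) (hdβ : ∀ t ∈ Icc q Q, mβ ≤ deriv V t)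
    (hc₁ : c₁ ∈ Icc P p) (hc₂ : c₂ ∈ Icc q Q) (hVc₁ : V c₁ = u) (hVc₂ : V c₂ = u)
    (hwell : ∀ t ∈ Icc p q, V t < u) :
    IntervalIntegrable (fun t => (u - V t) ^ (-(1 : ℝ) / 2)) volume P Q ∧
      |(∫ t in P..Q, (u - V t) ^ (-(1 : ℝ) / 2)) - ∫ t in p..q, (u - V t) ^ (-(1 : ℝ) / 2)|
        ≤ 2 * mα ^ (-(1 : ℝ) / 2) * √(p - P) + 2 * mβ ^ (-(1 : ℝ) / 2) * √(Q - q) := by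
  obtain ⟨hLi, hL⟩ := intervalIntegrable_and_integral_le_of_deriv_le hV hmα hPp hdα hc₁
  obtain ⟨hRi, hR⟩ := intervalIntegrable_and_integral_le_of_le_deriv hV hmβ hqQ hdβ hc₂
  rw [hVc₁] at hLi hL
  rw [hVc₂] at hRi hR
  have hMi : IntervalIntegrable (fun t => (u - V t) ^ (-(1 : ℝ) / 2)) volume p q := by
    refine ContinuousOn.intervalIntegrable fun t ht => ?_
    have := hwell t (uIcc_of_le hpq ▸ ht)
    exact ((continuous_const.sub hV.continuous).continuousAt.rpow_const
      (Or.inl (by simp; linarith))).continuousWithinAt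
  have hL0 := intervalIntegral.integral_nonneg (μ := volume) hPp fun t _ =>
    rpow_neg_half_nonneg (u - V t)
  have hR0 := intervalIntegral.integral_nonneg (μ := volume) hqQ fun t _ =>
    rpow_neg_half_nonneg (u - V t)
  refine ⟨hLi.trans (hMi.trans hRi), ?_⟩
  rw [← intervalIntegral.integral_add_adjacent_intervals hLi (hMi.trans hRi),
    ← intervalIntegral.integral_add_adjacent_intervals hMi hRi, abs_le]
  constructor <;> linarith

end SimpleWell

lemma integral_sqrt_sub_sub_integral_sqrt_sub {X : Type*} [MeasurableSpace X] {μ : Measure X}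
    [SFinite μ] {v : X → ℝ} (hv : Measurable v) {s r : ℝ} (hsr : s ≤ r)
    (hs : Integrable (fun x => √(s - v x)) μ) (hr : Integrable (fun x => √(r - v x)) μ) :
    ∫ x, √(r - v x) ∂μ - ∫ x, √(s - v x) ∂μ
      = (1 / 2) * ∫ u in s..r, ∫ x, (u - v x) ^ (-(1 : ℝ) / 2) ∂μ := by
  have hinner : ∀ x, ∫ u in Ioc s r, (u - v x) ^ (-(1 : ℝ) / 2)
      = 2 * √(r - v x) - 2 * √(s - v x) := fun x => by
    rw [← intervalIntegral.integral_of_le hsr, integral_sub_rpow_neg_half]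
  have hprod : Integrable (Function.uncurry fun x u => (u - v x) ^ (-(1 : ℝ) / 2))
      (μ.prod (volume.restrict (Ioc s r))) := by
    have hmeas : AEStronglyMeasurable (Function.uncurry fun x u => (u - v x) ^ (-(1 : ℝ) / 2))
        (μ.prod (volume.restrict (Ioc s r))) :=
      ((measurable_snd.sub (hv.comp measurable_fst)).pow_const _).aestronglyMeasurable
    refine (integrable_prod_iff hmeas).2 ⟨.of_forall fun x => ?_, ?_⟩
    · exact (intervalIntegrable_sub_rpow_neg_half (v x) s r).1
    · simp only [Function.uncurry_apply_pair, Real.norm_of_nonneg (rpow_neg_half_nonneg _),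
        hinner]
      exact (hr.const_mul 2).sub (hs.const_mul 2)
  rw [intervalIntegral.integral_of_le hsr, ← integral_integral_swap hprod]
  simp only [hinner]
  rw [integral_sub (hr.const_mul 2) (hs.const_mul 2), integral_const_mul, integral_const_mul]
  ring

lemma hasDerivAt_integral_sqrt_sub {X : Type*} [MeasurableSpace X] {μ : Measure X}
    [SFinite μ] {v : X → ℝ} (hv : Measurable v) (hint : ∀ x, Integrable (fun y => √(x - v y)) μ)
    {E : ℝ} (hG : ∀ᶠ u in 𝓝 E, ContinuousAt (fun u => ∫ y, (u - v y) ^ (-(1 : ℝ) / 2) ∂μ) u) :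
    HasDerivAt (fun x => ∫ y, √(x - v y) ∂μ)
      ((1 / 2) * ∫ y, (E - v y) ^ (-(1 : ℝ) / 2) ∂μ) E := by
  set G := fun u => ∫ y, (u - v y) ^ (-(1 : ℝ) / 2) ∂μ
  obtain ⟨ε, hε, hball⟩ := Metric.eventually_nhds_iff_ball.1 hG
  have hGcont : ContinuousOn G (Metric.ball E ε) := fun u hu => (hball u hu).continuousWithinAt
  set E₀ := E - ε / 2 with hE₀
  have hsub : uIcc E₀ E ⊆ Metric.ball E ε := by
    rw [uIcc_of_le (by linarith), Real.ball_eq_Ioo]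
    exact Icc_subset_Ioo (by linarith) (by linarith)
  have hFTC := intervalIntegral.integral_hasDerivAt_right (hGcont.mono hsub).intervalIntegrable
    (hGcont.stronglyMeasurableAtFilter Metric.isOpen_ball E (Metric.mem_ball_self hε))
    (hball E (Metric.mem_ball_self hε))
  refine ((hFTC.const_mul (1 / 2)).const_add (∫ y, √(E₀ - v y) ∂μ)).congr_of_eventuallyEq ?_
  filter_upwards [lt_mem_nhds (show E₀ < E by linarith)] with x hx
  rw [← integral_sqrt_sub_sub_integral_sqrt_sub hv hx.le (hint E₀) (hint x)]
  ring

structure IsSimpleWellFamily (V : ℝ → ℝ) (a b : ℝ) (α β : ℝ → ℝ) (I : Set ℝ) : Prop where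
  continuousOn_left : ContinuousOn α I
  continuousOn_right : ContinuousOn β I
  mem_Ioo : ∀ E ∈ I, α E ∈ Ioo a b ∧ β E ∈ Ioo a b
  left_lt_right : ∀ E ∈ I, α E < β E
  apply_left : ∀ E ∈ I, V (α E) = E
  apply_right : ∀ E ∈ I, V (β E) = E
  deriv_left_neg : ∀ E ∈ I, deriv V (α E) < 0
  deriv_right_pos : ∀ E ∈ I, 0 < deriv V (β E)
  lt_iff_mem_Ioo : ∀ E ∈ I, ∀ x ∈ Icc a b, (V x < E ↔ x ∈ Ioo (α E) (β E))

namespace IsSimpleWellFamily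

variable {V : ℝ → ℝ} {a b : ℝ} {α β : ℝ → ℝ} {I : Set ℝ} {E t : ℝ}

theorem Ioo_subset_Ioo (h : IsSimpleWellFamily V a b α β I) (hE : E ∈ I) :
    Ioo (α E) (β E) ⊆ Ioo a b :=
  Set.Ioo_subset_Ioo (h.mem_Ioo E hE).1.1.le (h.mem_Ioo E hE).2.2.le

theorem lt_of_mem_Ioo (h : IsSimpleWellFamily V a b α β I) (hE : E ∈ I)
    (ht : t ∈ Ioo (α E) (β E)) : V t < E :=
  (h.lt_iff_mem_Ioo E hE t (Ioo_subset_Icc_self (h.Ioo_subset_Ioo hE ht))).2 ht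

theorem le_of_mem_Icc (h : IsSimpleWellFamily V a b α β I) (hE : E ∈ I)
    (ht : t ∈ Icc (α E) (β E)) : V t ≤ E := by
  rcases ht.1.eq_or_lt with rfl | hα
  · exact (h.apply_left E hE).le
  rcases ht.2.eq_or_lt with rfl | hβ
  · exact (h.apply_right E hE).le
  exact (h.lt_of_mem_Ioo hE ⟨hα, hβ⟩).le

theorem le_of_notMem_Ioo (h : IsSimpleWellFamily V a b α β I) (hE : E ∈ I) (ht : t ∈ Icc a b)
    (ht' : t ∉ Ioo (α E) (β E)) : E ≤ V t :=
  not_lt.1 fun hlt => ht' ((h.lt_iff_mem_Ioo E hE t ht).1 hlt)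

theorem strictAntiOn_left (h : IsSimpleWellFamily V a b α β I) : StrictAntiOn α I :=
  fun E hE E' hE' hlt => ((h.lt_iff_mem_Ioo E' hE' (α E)
    (Ioo_subset_Icc_self (h.mem_Ioo E hE).1)).1 (by rwa [h.apply_left E hE])).1

theorem strictMonoOn_right (h : IsSimpleWellFamily V a b α β I) : StrictMonoOn β I :=
  fun E hE E' hE' hlt => ((h.lt_iff_mem_Ioo E' hE' (β E)
    (Ioo_subset_Icc_self (h.mem_Ioo E hE).2)).1 (by rwa [h.apply_right E hE])).2

theorem setIntegral_eq_setIntegral_Ioo (h : IsSimpleWellFamily V a b α β I) (hE : E ∈ I)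
    {S : Set ℝ} (hS : MeasurableSet S) (hwell : Ioo (α E) (β E) ⊆ S) (hSab : S ⊆ Icc a b)
    {f : ℝ → ℝ} (hf : ∀ t, E ≤ V t → f t = 0) :
    ∫ t in S, f t = ∫ t in Ioo (α E) (β E), f t :=
  setIntegral_eq_of_subset_of_forall_sdiff_eq_zero hS hwell fun t ht =>
    hf t (h.le_of_notMem_Ioo hE (hSab ht.1) ht.2)

theorem setIntegral_Ioc_eq_setIntegral_Ioo (h : IsSimpleWellFamily V a b α β I) (hE : E ∈ I)
    {f : ℝ → ℝ} (hf : ∀ t, E ≤ V t → f t = 0) :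
    ∫ t in Ioc a b, f t = ∫ t in Ioo (α E) (β E), f t :=
  h.setIntegral_eq_setIntegral_Ioo hE measurableSet_Ioc
    ((h.Ioo_subset_Ioo hE).trans Ioo_subset_Ioc_self) Ioc_subset_Icc_self hf

theorem exists_bracket (h : IsSimpleWellFamily V a b α β I) (hV : ContDiff ℝ 1 V) {e : ℝ}
    (hIe : I ∈ 𝓝 e) :
    ∃ mα > 0, ∃ mβ > 0, ∀ ε > 0, ∃ δ > 0, e - δ ∈ I ∧ e + δ ∈ I ∧
      (∀ t ∈ Icc (α (e + δ)) (α (e - δ)), deriv V t ≤ -mα) ∧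
      (∀ t ∈ Icc (β (e - δ)) (β (e + δ)), mβ ≤ deriv V t) ∧
      2 * mα ^ (-(1 : ℝ) / 2) * √(α (e - δ) - α (e + δ))
        + 2 * mβ ^ (-(1 : ℝ) / 2) * √(β (e + δ) - β (e - δ)) < ε := by
  have he := mem_of_mem_nhds hIe
  have hplus : Tendsto (fun δ => e + δ) (𝓝 0) (𝓝 e) :=
    (continuous_const_add e).tendsto' 0 e (add_zero e)
  have hminus : Tendsto (fun δ => e - δ) (𝓝 0) (𝓝 e) :=
    (continuous_sub_left e).tendsto' 0 e (sub_zero e)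
  have hαp : Tendsto (fun δ => α (e + δ)) (𝓝 0) (𝓝 (α e)) :=
    (h.continuousOn_left.continuousAt hIe).tendsto.comp hplus
  have hαm : Tendsto (fun δ => α (e - δ)) (𝓝 0) (𝓝 (α e)) :=
    (h.continuousOn_left.continuousAt hIe).tendsto.comp hminus
  have hβp : Tendsto (fun δ => β (e + δ)) (𝓝 0) (𝓝 (β e)) :=
    (h.continuousOn_right.continuousAt hIe).tendsto.comp hplus
  have hβm : Tendsto (fun δ => β (e - δ)) (𝓝 0) (𝓝 (β e)) :=
    (h.continuousOn_right.continuousAt hIe).tendsto.comp hminus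
  have hV' := (hV.continuous_deriv le_rfl).tendsto
  set mα := -deriv V (α e) / 2 with hmα_def
  set mβ := deriv V (β e) / 2 with hmβ_def
  have hmα : 0 < mα := by linarith [h.deriv_left_neg e he]
  have hmβ : 0 < mβ := by linarith [h.deriv_right_pos e he]
  have hslopeα : ∀ᶠ t in 𝓝 (α e), deriv V t ≤ -mα :=
    (hV' (α e)).eventually (ge_mem_nhds (by linarith))
  have hslopeβ : ∀ᶠ t in 𝓝 (β e), mβ ≤ deriv V t :=
    (hV' (β e)).eventually (le_mem_nhds (by linarith))
  have hwidth : Tendsto (fun δ => 2 * mα ^ (-(1 : ℝ) / 2) * √(α (e - δ) - α (e + δ))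
      + 2 * mβ ^ (-(1 : ℝ) / 2) * √(β (e + δ) - β (e - δ))) (𝓝 0) (𝓝 0) := by
    simpa using ((hαm.sub hαp).sqrt.const_mul (2 * mα ^ (-(1 : ℝ) / 2))).add
      ((hβp.sub hβm).sqrt.const_mul (2 * mβ ^ (-(1 : ℝ) / 2)))
  refine ⟨mα, hmα, mβ, hmβ, fun ε hε => ?_⟩
  obtain ⟨δ, ⟨⟨⟨hem, hep⟩, hzα, hzβ⟩, hδε⟩, hδ⟩ :=
    ((((hminus.eventually hIe).and (hplus.eventually hIe)).and
      (((hαp.Icc hαm).eventually (eventually_smallSets_forall.2 hslopeα)).and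
        ((hβm.Icc hβp).eventually (eventually_smallSets_forall.2 hslopeβ)))).and
      (hwidth.eventually (gt_mem_nhds hε))).filter_mono nhdsWithin_le_nhds
      |>.and (self_mem_nhdsWithin (a := 0) (s := Ioi 0)) |>.exists
  exact ⟨δ, hδ, hem, hep, hzα, hzβ, hδε⟩

theorem intervalIntegrable_and_abs_integral_sub_le_of_bracket (h : IsSimpleWellFamily V a b α β I)
    (hV : Differentiable ℝ V) {e δ u mα mβ : ℝ} (hmα : 0 < mα) (hmβ : 0 < mβ)
    (hem : e - δ ∈ I) (hep : e + δ ∈ I)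
    (hdα : ∀ t ∈ Icc (α (e + δ)) (α (e - δ)), deriv V t ≤ -mα)
    (hdβ : ∀ t ∈ Icc (β (e - δ)) (β (e + δ)), mβ ≤ deriv V t)
    (hu : u ∈ I) (hu' : u ∈ Ioo (e - δ) (e + δ)) :
    IntervalIntegrable (fun t => (u - V t) ^ (-(1 : ℝ) / 2)) volume (α (e + δ)) (β (e + δ)) ∧
      |(∫ t in Ioc a b, (u - V t) ^ (-(1 : ℝ) / 2))
          - ∫ t in α (e - δ)..β (e - δ), (u - V t) ^ (-(1 : ℝ) / 2)|
        ≤ 2 * mα ^ (-(1 : ℝ) / 2) * √(α (e - δ) - α (e + δ))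
          + 2 * mβ ^ (-(1 : ℝ) / 2) * √(β (e + δ) - β (e - δ)) := by
  have hαp := h.strictAntiOn_left hu hep hu'.2
  have hαm := h.strictAntiOn_left hem hu hu'.1
  have hβp := h.strictMonoOn_right hu hep hu'.2
  have hβm := h.strictMonoOn_right hem hu hu'.1
  have hPQ : α (e + δ) ≤ β (e + δ) := (h.left_lt_right _ hep).le
  obtain ⟨hint, hle⟩ := intervalIntegrable_and_abs_integral_sub_le hV hmα hmβ
    (hαp.trans hαm).le (h.left_lt_right _ hem).le (hβm.trans hβp).le hdα hdβ
    ⟨hαp.le, hαm.le⟩ ⟨hβm.le, hβp.le⟩ (h.apply_left u hu) (h.apply_right u hu)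
    fun t ht => (h.le_of_mem_Icc hem ht).trans_lt hu'.1
  refine ⟨hint, ?_⟩
  have hvanish : ∀ t, u ≤ V t → (u - V t) ^ (-(1 : ℝ) / 2) = 0 :=
    fun t ht => rpow_neg_half_of_nonpos (sub_nonpos.2 ht)
  rwa [h.setIntegral_Ioc_eq_setIntegral_Ioo hu hvanish,
    ← h.setIntegral_eq_setIntegral_Ioo hu measurableSet_Ioc
      (Set.Ioo_subset_Ioc_self.trans (Ioc_subset_Ioc hαp.le hβp.le))
      (Ioc_subset_Icc_self.trans (Icc_subset_Icc (h.mem_Ioo _ hep).1.1.le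
        (h.mem_Ioo _ hep).2.2.le)) hvanish,
    ← intervalIntegral.integral_of_le hPQ]

theorem integrableOn_rpow_neg_half (h : IsSimpleWellFamily V a b α β I) (hV : ContDiff ℝ 1 V)
    (hIE : I ∈ 𝓝 E) :
    IntegrableOn (fun t => (E - V t) ^ (-(1 : ℝ) / 2)) (Ioo (α E) (β E)) := by
  obtain ⟨mα, hmα, mβ, hmβ, hbracket⟩ := h.exists_bracket hV hIE
  obtain ⟨δ, hδ, hem, hep, hdα, hdβ, -⟩ := hbracket 1 one_pos
  have hE := mem_of_mem_nhds hIE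
  have hint := (h.intervalIntegrable_and_abs_integral_sub_le_of_bracket
    (hV.differentiable one_ne_zero) hmα hmβ hem hep hdα hdβ hE ⟨by linarith, by linarith⟩).1
  exact hint.1.mono_set (Ioo_subset_Ioc_self.trans (Ioc_subset_Ioc
    (h.strictAntiOn_left hE hep (by linarith)).le
    (h.strictMonoOn_right hE hep (by linarith)).le))

theorem continuousAt_integral_rpow_neg_half (h : IsSimpleWellFamily V a b α β I)
    (hV : ContDiff ℝ 1 V) {e : ℝ} (hIe : I ∈ 𝓝 e) :
    ContinuousAt (fun u => ∫ t in Ioc a b, (u - V t) ^ (-(1 : ℝ) / 2)) e := by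
  obtain ⟨mα, hmα, mβ, hmβ, hbracket⟩ := h.exists_bracket hV hIe
  refine continuousAt_of_locally_uniform_approx_of_continuousAt fun U hU => ?_
  obtain ⟨ε, hε, hεU⟩ := Metric.mem_uniformity_dist.1 hU
  obtain ⟨δ, hδ, hem, hep, hdα, hdβ, hsmall⟩ := hbracket ε hε
  have hmiddle : ∀ t ∈ uIcc (α (e - δ)) (β (e - δ)), V t ≤ e - δ := fun t ht =>
    h.le_of_mem_Icc hem (uIcc_of_le (h.left_lt_right _ hem).le ▸ ht)
  refine ⟨I ∩ Ioo (e - δ) (e + δ), inter_mem hIe (Ioo_mem_nhds (by linarith) (by linarith)), _,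
    continuousAt_intervalIntegral_rpow_neg_half hV.continuous (by linarith) hmiddle,
    fun u hu => hεU ?_⟩
  rw [Real.dist_eq]
  exact ((h.intervalIntegrable_and_abs_integral_sub_le_of_bracket
    (hV.differentiable one_ne_zero) hmα hmβ hem hep hdα hdβ hu.1 hu.2).2).trans_lt hsmall

theorem integral_rpow_neg_half_pos (h : IsSimpleWellFamily V a b α β I) (hE : E ∈ I)
    (hint : IntegrableOn (fun t => (E - V t) ^ (-(1 : ℝ) / 2)) (Ioo (α E) (β E))) :
    0 < ∫ t in Ioo (α E) (β E), (E - V t) ^ (-(1 : ℝ) / 2) := by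
  have hαβ := h.left_lt_right E hE
  rw [← integral_Ioc_eq_integral_Ioo, ← intervalIntegral.integral_of_le hαβ.le]
  exact intervalIntegral.intervalIntegral_pos_of_pos_on
    ((intervalIntegrable_iff_integrableOn_Ioo_of_le hαβ.le).2 hint)
    (fun t ht => Real.rpow_pos_of_pos (sub_pos.2 (h.lt_of_mem_Ioo hE ht)) _) hαβ

end IsSimpleWellFamily

theorem stmt1_general (E₁ E₂ : ℝ) (V : ℝ → ℝ) (hV : ContDiff ℝ 2 V) (a b : ℝ)
    (α β : ℝ → ℝ) (hα : ContinuousOn α (Ioo E₁ E₂)) (hβ : ContinuousOn β (Ioo E₁ E₂))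
    (hrange : ∀ E ∈ Ioo E₁ E₂, α E ∈ Ioo a b ∧ β E ∈ Ioo a b)
    (hαβ : ∀ E ∈ Ioo E₁ E₂, α E < β E)
    (hVα : ∀ E ∈ Ioo E₁ E₂, V (α E) = E) (hVβ : ∀ E ∈ Ioo E₁ E₂, V (β E) = E)
    (hV'α : ∀ E ∈ Ioo E₁ E₂, deriv V (α E) < 0) (hV'β : ∀ E ∈ Ioo E₁ E₂, 0 < deriv V (β E))
    (hwell : ∀ E ∈ Ioo E₁ E₂, ∀ x ∈ Icc a b, (V x < E ↔ x ∈ Ioo (α E) (β E))) :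
    ∀ E ∈ Ioo E₁ E₂,
      IntegrableOn (fun x => (E - V x) ^ (-(1 : ℝ) / 2)) (Ioo (α E) (β E)) ∧
      HasDerivAt (fun E' => ∫ t in α E'..β E', Real.sqrt (E' - V t))
        ((1 / 2) * ∫ x in Ioo (α E) (β E), (E - V x) ^ (-(1 : ℝ) / 2)) E ∧
      0 < (1 / 2) * ∫ x in Ioo (α E) (β E), (E - V x) ^ (-(1 : ℝ) / 2) := by
  intro E hE
  have hW : IsSimpleWellFamily V a b α β (Ioo E₁ E₂) :=
    ⟨hα, hβ, hrange, hαβ, hVα, hVβ, hV'α, hV'β, hwell⟩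
  have hV₁ : ContDiff ℝ 1 V := hV.of_le one_le_two
  have hint := hW.integrableOn_rpow_neg_half hV₁ (Ioo_mem_nhds hE.1 hE.2)
  refine ⟨hint, ?_, by have := hW.integral_rpow_neg_half_pos hE hint; positivity⟩
  have hderiv := hasDerivAt_integral_sqrt_sub (μ := volume.restrict (Ioc a b))
    hV.continuous.measurable
    (fun x => (Real.continuous_sqrt.comp (continuous_const.sub hV.continuous)).integrableOn_Ioc)
    ((eventually_mem_nhds_iff.2 (Ioo_mem_nhds hE.1 hE.2)).mono fun _ hu =>
      hW.continuousAt_integral_rpow_neg_half hV₁ hu)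
  rw [hW.setIntegral_Ioc_eq_setIntegral_Ioo hE fun t ht =>
    rpow_neg_half_of_nonpos (sub_nonpos.2 ht)] at hderiv
  refine hderiv.congr_of_eventuallyEq ?_
  filter_upwards [Ioo_mem_nhds hE.1 hE.2] with E' hE'
  rw [intervalIntegral.integral_of_le (hαβ E' hE').le, integral_Ioc_eq_integral_Ioo,
    hW.setIntegral_Ioc_eq_setIntegral_Ioo hE' fun t ht => Real.sqrt_eq_zero'.2 (sub_nonpos.2 ht)]

/-- Differentiability and positivity of the derivative of the action integral
`𝒜(E) = ∫_{α(E)}^{β(E)} √(E − V(t)) dt` associated with a simple potential well,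
with `𝒜'(E) = (1/2)∫_{α(E)}^{β(E)} (E − V(x))^(−1/2) dx` a convergent improper integral. -/
theorem stmt1 (E₁ E₂ : ℝ) (V : ℝ → ℝ) (hV : ContDiff ℝ 2 V) (a b : ℝ) (hab : a < b)
    (α β : ℝ → ℝ) (hα : ContinuousOn α (Ioo E₁ E₂)) (hβ : ContinuousOn β (Ioo E₁ E₂))
    (hrange : ∀ E ∈ Ioo E₁ E₂, α E ∈ Ioo a b ∧ β E ∈ Ioo a b)
    (hαβ : ∀ E ∈ Ioo E₁ E₂, α E < β E)
    (hVα : ∀ E ∈ Ioo E₁ E₂, V (α E) = E) (hVβ : ∀ E ∈ Ioo E₁ E₂, V (β E) = E)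
    (hV'α : ∀ E ∈ Ioo E₁ E₂, deriv V (α E) < 0) (hV'β : ∀ E ∈ Ioo E₁ E₂, 0 < deriv V (β E))
    (hwell : ∀ E ∈ Ioo E₁ E₂, ∀ x ∈ Icc a b, (V x < E ↔ x ∈ Ioo (α E) (β E))) :
    ∀ E ∈ Ioo E₁ E₂,
      IntegrableOn (fun x => (E - V x) ^ (-(1 : ℝ) / 2)) (Ioo (α E) (β E)) ∧
      HasDerivAt (fun E' => ∫ t in α E'..β E', Real.sqrt (E' - V t))
        ((1 / 2) * ∫ x in Ioo (α E) (β E), (E - V x) ^ (-(1 : ℝ) / 2)) E ∧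
      0 < (1 / 2) * ∫ x in Ioo (α E) (β E), (E - V x) ^ (-(1 : ℝ) / 2) :=
  stmt1_general E₁ E₂ V hV a b α β hα hβ hrange hαβ hVα hVβ hV'α hV'β hwell
end

section
/- Let q₁, q₂ : ℝ² → ℝ be twice continuously differentiable and r : ℝ² → ℂ continuous, with q₁(0, 0) = q₂(0, 0) = 0, ∂_ξ q₁(0, 0) ≠ 0 and {q₁, q₂}(0, 0) ≠ 0, where {q₁, q₂} := ∂_ξ q₁ ∂_x q₂ − ∂_x q₁ ∂_ξ q₂. Let φ be twice continuously differentiable near 0 with φ(0) = φ'(0) = 0 and q₁(x, φ'(x)) = 0 for all x near 0, and let a₀ be a continuous function with a₀(0) = 1. Then for all small x ≠ 0 one has q₂(x, φ'(x)) ≠ 0, and the function b(x) := − ( conj(r(x, φ'(x))) / q₂(x, φ'(x)) ) a₀(x) satisfies lim_{x→0} x·b(x) = − ∂_ξ q₁(0, 0)·conj(r(0, 0)) / {q₁, q₂}(0, 0); i.e., b has a simple pole at x = 0 with this residue-type coefficient. -/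
open Set Filter Topology

/-! Along the curve `x ↦ (x, φ'(x))` the symbol `q₁` vanishes identically, so the chain rule
forces `φ''(0) = -∂ₓq₁/∂_ξq₁` at the crossing point, and then the derivative of `q₂(x, φ'(x))`
at `0` is `{q₁, q₂}/∂_ξq₁ ≠ 0`. Thus `q₂` has a simple zero along the curve, `x / q₂(x, φ'(x))`
tends to `∂_ξq₁/{q₁, q₂}`, and the remaining factors of `x·b(x)` are continuous at `0`. -/

section Partials

variable {𝕜 : Type*} [NontriviallyNormedField 𝕜] {E : Type*} [NormedAddCommGroup E]
  [NormedSpace 𝕜 E]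

noncomputable def partialFst (f : 𝕜 × 𝕜 → E) (p : 𝕜 × 𝕜) : E := deriv (fun x => f (x, p.2)) p.1

noncomputable def partialSnd (f : 𝕜 × 𝕜 → E) (p : 𝕜 × 𝕜) : E := deriv (fun η => f (p.1, η)) p.2

theorem DifferentiableAt.hasDerivAt_comp_graph {f : 𝕜 × 𝕜 → E} {ψ : 𝕜 → 𝕜} {m x₀ : 𝕜}
    (hf : DifferentiableAt 𝕜 f (x₀, ψ x₀)) (hψ : HasDerivAt ψ m x₀) :
    HasDerivAt (fun x => f (x, ψ x))
      (partialFst f (x₀, ψ x₀) + m • partialSnd f (x₀, ψ x₀)) x₀ := by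
  have hfst : HasDerivAt (fun x => f (x, ψ x₀)) (fderiv 𝕜 f (x₀, ψ x₀) (1, 0)) x₀ :=
    hf.hasFDerivAt.comp_hasDerivAt x₀ ((hasDerivAt_id x₀).prodMk (hasDerivAt_const _ _))
  have hsnd : HasDerivAt (fun η => f (x₀, η)) (fderiv 𝕜 f (x₀, ψ x₀) (0, 1)) (ψ x₀) :=
    hf.hasFDerivAt.comp_hasDerivAt (ψ x₀) ((hasDerivAt_const _ _).prodMk (hasDerivAt_id _))
  have hsplit : ((1 : 𝕜), m) = (1, 0) + m • (0, 1) := by simp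
  have h := hf.hasFDerivAt.comp_hasDerivAt x₀ ((hasDerivAt_id x₀).prodMk hψ)
  rwa [hsplit, map_add, map_smul, ← hfst.deriv, ← hsnd.deriv] at h

end Partials

noncomputable def poissonBracket (q₁ q₂ : ℝ × ℝ → ℝ) (p : ℝ × ℝ) : ℝ :=
  partialSnd q₁ p * partialFst q₂ p - partialFst q₁ p * partialSnd q₂ p

theorem hasDerivAt_comp_graph_of_eikonal {q₁ q₂ : ℝ × ℝ → ℝ} {ψ : ℝ → ℝ} {m x₀ : ℝ}
    (hq₁ : DifferentiableAt ℝ q₁ (x₀, ψ x₀)) (hq₂ : DifferentiableAt ℝ q₂ (x₀, ψ x₀))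
    (hψ : HasDerivAt ψ m x₀) (heik : ∀ᶠ x in 𝓝 x₀, q₁ (x, ψ x) = 0)
    (hξ : partialSnd q₁ (x₀, ψ x₀) ≠ 0) :
    HasDerivAt (fun x => q₂ (x, ψ x))
      (poissonBracket q₁ q₂ (x₀, ψ x₀) / partialSnd q₁ (x₀, ψ x₀)) x₀ := by
  have hslope : partialFst q₁ (x₀, ψ x₀) + m * partialSnd q₁ (x₀, ψ x₀) = 0 :=
    (hq₁.hasDerivAt_comp_graph hψ).unique ((hasDerivAt_const x₀ 0).congr_of_eventuallyEq heik)
  refine (hq₂.hasDerivAt_comp_graph hψ).congr_deriv ?_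
  rw [poissonBracket, smul_eq_mul, eq_div_iff hξ]
  linear_combination partialSnd q₂ (x₀, ψ x₀) * hslope

theorem HasDerivAt.tendsto_sub_div_of_eq_zero {𝕜 : Type*} [NontriviallyNormedField 𝕜]
    {g : 𝕜 → 𝕜} {L x₀ : 𝕜} (hg : HasDerivAt g L x₀) (hg₀ : g x₀ = 0) (hL : L ≠ 0) :
    Tendsto (fun x => (x - x₀) / g x) (𝓝[≠] x₀) (𝓝 L⁻¹) := by
  have h := (hasDerivAt_iff_tendsto_slope.mp hg).inv₀ hL
  simpa [slope_def_field, hg₀, inv_div] using h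

theorem Filter.Tendsto.ofReal_mul_neg_div_mul {l : Filter ℝ} {ρ : ℝ → ℂ} {g a : ℝ → ℝ}
    {c : ℂ} {ℓ α : ℝ} (hρ : Tendsto ρ l (𝓝 c)) (hg : Tendsto (fun x => x / g x) l (𝓝 ℓ))
    (ha : Tendsto a l (𝓝 α)) :
    Tendsto (fun x : ℝ => (x : ℂ) * (-(ρ x / g x) * a x)) l (𝓝 (-(c * ℓ * α))) := by
  have h := ((hρ.mul (Complex.continuous_ofReal.tendsto ℓ |>.comp hg)).mul
    (Complex.continuous_ofReal.tendsto α |>.comp ha)).neg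
  convert h using 2 with x
  simp only [Function.comp_apply, Complex.ofReal_div]
  ring

theorem stmt12_general (q₁ q₂ : ℝ × ℝ → ℝ) (r : ℝ × ℝ → ℂ)
    (hq₁ : ContDiff ℝ 2 q₁) (hq₂ : ContDiff ℝ 2 q₂) (hr : Continuous r)
    (h20 : q₂ (0, 0) = 0)
    (hξ : deriv (fun η => q₁ (0, η)) 0 ≠ 0)
    (hpb : deriv (fun η => q₁ (0, η)) 0 * deriv (fun x => q₂ (x, 0)) 0 -
        deriv (fun x => q₁ (x, 0)) 0 * deriv (fun η => q₂ (0, η)) 0 ≠ 0)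
    (δ : ℝ) (hδ : 0 < δ) (φ : ℝ → ℝ) (hφ : ContDiffOn ℝ 2 φ (Ioo (-δ) δ))
    (hφ'0 : deriv φ 0 = 0)
    (heik : ∀ x ∈ Ioo (-δ) δ, q₁ (x, deriv φ x) = 0)
    (a₀ : ℝ → ℝ) (ha₀ : Continuous a₀) (ha₀0 : a₀ 0 = 1) :
    (∃ δ' > 0, ∀ x : ℝ, x ≠ 0 → |x| < δ' → q₂ (x, deriv φ x) ≠ 0) ∧
    Tendsto
      (fun x : ℝ => (x : ℂ) *
        (-(starRingEnd ℂ (r (x, deriv φ x)) / (q₂ (x, deriv φ x) : ℂ)) * (a₀ x : ℂ)))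
      (nhdsWithin 0 {(0 : ℝ)}ᶜ)
      (nhds (-((deriv (fun η => q₁ (0, η)) 0 : ℂ) * starRingEnd ℂ (r (0, 0)) /
        ((deriv (fun η => q₁ (0, η)) 0 * deriv (fun x => q₂ (x, 0)) 0 -
          deriv (fun x => q₁ (x, 0)) 0 * deriv (fun η => q₂ (0, η)) 0 : ℝ) : ℂ)))) := by
  set ψ := deriv φ
  have h0 : Ioo (-δ) δ ∈ 𝓝 (0 : ℝ) := isOpen_Ioo.mem_nhds ⟨neg_lt_zero.mpr hδ, hδ⟩
  have hψ : HasDerivAt ψ (deriv ψ 0) 0 :=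
    (((hφ.deriv_of_isOpen isOpen_Ioo (by norm_num)).differentiableOn one_ne_zero).differentiableAt
      h0).hasDerivAt
  have hq₁d := hq₁.differentiable two_ne_zero
  have hcurve : HasDerivAt (fun x => q₂ (x, ψ x))
      (poissonBracket q₁ q₂ (0, 0) / partialSnd q₁ (0, 0)) 0 := by
    have h := hasDerivAt_comp_graph_of_eikonal (hq₁d _) (hq₂.differentiable two_ne_zero _) hψ
      (eventually_of_mem h0 heik) (by rwa [hφ'0])
    rwa [hφ'0] at h
  have hL : poissonBracket q₁ q₂ (0, 0) / partialSnd q₁ (0, 0) ≠ 0 := div_ne_zero hpb hξ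
  refine ⟨?_, ?_⟩
  · obtain ⟨δ', hδ', h⟩ := Metric.eventually_nhds_iff.mp
      (eventually_nhdsWithin_iff.mp (hcurve.eventually_ne hL))
    refine ⟨δ', hδ', fun x hx hxδ => ?_⟩
    simpa [hφ'0, h20] using h (by simpa [Real.dist_eq] using hxδ) hx
  · have hρ : ContinuousAt (fun x => starRingEnd ℂ (r (x, ψ x))) 0 :=
      (Complex.continuous_conj.comp hr).continuousAt.comp (continuousAt_id.prodMk hψ.continuousAt)
    have hB : deriv (fun η => (q₁ (0, η) : ℂ)) 0 = partialSnd q₁ (0, 0) := by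
      have h : DifferentiableAt ℝ (fun η => q₁ (0, η)) 0 := by fun_prop
      exact h.hasDerivAt.ofReal_comp.deriv
    convert (tendsto_nhdsWithin_of_tendsto_nhds hρ.tendsto).ofReal_mul_neg_div_mul
      (by simpa using hcurve.tendsto_sub_div_of_eq_zero (by simpa [hφ'0]) hL)
      (tendsto_nhdsWithin_of_tendsto_nhds (ha₀.tendsto 0)) using 2
    rw [hB, hφ'0, ha₀0]
    simp only [poissonBracket, partialFst, partialSnd]
    push_cast
    field_simp

/-- The subleading WKB amplitude `b = −(conj r/q₂)a₀` along the phase `φ` solving the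
eikonal equation `q₁(x, φ'(x)) = 0` through a transversal crossing point has a simple pole
at `x = 0`: `q₂(x, φ'(x)) ≠ 0` for small `x ≠ 0` and
`x·b(x) → −∂_ξ q₁(0,0)·conj(r(0,0))/{q₁, q₂}(0,0)` as `x → 0`. -/
theorem stmt12 (q₁ q₂ : ℝ × ℝ → ℝ) (r : ℝ × ℝ → ℂ)
    (hq₁ : ContDiff ℝ 2 q₁) (hq₂ : ContDiff ℝ 2 q₂) (hr : Continuous r)
    (h10 : q₁ (0, 0) = 0) (h20 : q₂ (0, 0) = 0)
    (hξ : deriv (fun η => q₁ (0, η)) 0 ≠ 0)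
    (hpb : deriv (fun η => q₁ (0, η)) 0 * deriv (fun x => q₂ (x, 0)) 0 -
        deriv (fun x => q₁ (x, 0)) 0 * deriv (fun η => q₂ (0, η)) 0 ≠ 0)
    (δ : ℝ) (hδ : 0 < δ) (φ : ℝ → ℝ) (hφ : ContDiffOn ℝ 2 φ (Ioo (-δ) δ))
    (hφ0 : φ 0 = 0) (hφ'0 : deriv φ 0 = 0)
    (heik : ∀ x ∈ Ioo (-δ) δ, q₁ (x, deriv φ x) = 0)
    (a₀ : ℝ → ℝ) (ha₀ : Continuous a₀) (ha₀0 : a₀ 0 = 1) :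
    (∃ δ' > 0, ∀ x : ℝ, x ≠ 0 → |x| < δ' → q₂ (x, deriv φ x) ≠ 0) ∧
    Tendsto
      (fun x : ℝ => (x : ℂ) *
        (-(starRingEnd ℂ (r (x, deriv φ x)) / (q₂ (x, deriv φ x) : ℂ)) * (a₀ x : ℂ)))
      (nhdsWithin 0 {(0 : ℝ)}ᶜ)
      (nhds (-((deriv (fun η => q₁ (0, η)) 0 : ℂ) * starRingEnd ℂ (r (0, 0)) /
        ((deriv (fun η => q₁ (0, η)) 0 * deriv (fun x => q₂ (x, 0)) 0 -
          deriv (fun x => q₁ (x, 0)) 0 * deriv (fun η => q₂ (0, η)) 0 : ℝ) : ℂ)))) :=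
  stmt12_general q₁ q₂ r hq₁ hq₂ hr h20 hξ hpb δ hδ φ hφ hφ'0 heik a₀ ha₀ ha₀0
end

section
/- Let C ≥ 0. There exists C' ≥ 0, depending only on C, such that the following holds for all h ∈ (0, 1]. Let u_{1L}, u_{1R}, u_{2L}, u_{2R}, d_{1L}, d_{1R}, d_{2L}, d_{2R} ∈ ℂ with |u_{jS}| ≤ C h^{1/6} and |d_{jS}| ≤ C h^{−5/6} for j ∈ {1,2}, S ∈ {L,R}. Let M be a 4×4 complex matrix of the form M = M₀ + R, where M₀ is the matrix with columns (u_{1L}, 0, d_{1L}, 0), (0, u_{2L}, 0, d_{2L}), (u_{1R}, 0, d_{1R}, 0), (0, u_{2R}, 0, d_{2R}), and the error matrix R satisfies |R_{kl}| ≤ C h^{1/3} for k ∈ {1, 2} and |R_{kl}| ≤ C h^{−2/3} for k ∈ {3, 4} (all l). Then | det M − (u_{1L} d_{1R} − d_{1L} u_{1R})(u_{2L} d_{2R} − d_{2L} u_{2R}) | ≤ C' h^{−7/6}. -/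
/-!
Expand `det (M₀ + R)` multilinearly in the rows. The term with all rows from `M₀` is the
product of the two scalar Wronskians, since `M₀` is block diagonal after a permutation of rows
and columns. Every other term contains a row of `R`, which is smaller than the corresponding
row of `M₀` by the factor `h^{1/6}`; as the row sizes of `M₀` multiply to
`h^{1/6 + 1/6 - 5/6 - 5/6} = h^{-4/3}`, each such term is `O(h^{-7/6})`.
-/

open Finset

namespace Matrix

variable {n R : Type*} [Fintype n] [DecidableEq n]

theorem norm_det_le_factorial_mul_prod [NormedCommRing R] [NormOneClass R]
    {A : Matrix n n R} {b : n → ℝ} (hA : ∀ i j, ‖A i j‖ ≤ b i) :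
    ‖A.det‖ ≤ (Fintype.card n).factorial * ∏ i, b i := by
  rw [det_apply]
  calc ‖∑ σ : Equiv.Perm n, Equiv.Perm.sign σ • ∏ i, A (σ i) i‖
      ≤ ∑ _σ : Equiv.Perm n, ∏ i, b i := by
        refine (norm_sum_le _ _).trans (sum_le_sum fun σ _ => ?_)
        calc ‖Equiv.Perm.sign σ • ∏ i, A (σ i) i‖ = ‖∏ i, A (σ i) i‖ := norm_units_zsmul _ _
          _ ≤ ∏ i, ‖A (σ i) i‖ := norm_prod_le _ _
          _ ≤ ∏ i, b (σ i) := prod_le_prod (fun i _ => norm_nonneg _) fun i _ => hA _ _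
          _ = ∏ i, b i := Equiv.prod_comp σ b
    _ = _ := by simp [Fintype.card_perm]

theorem det_add_sub_det_eq_sum [CommRing R] (A B : Matrix n n R) :
    (A + B).det - A.det = ∑ s ∈ univ.erase univ, det (s.piecewise A B) := by
  have h := detRowAlternating.toMultilinearMap.map_add_univ A B
  rw [← add_sum_erase _ _ (mem_univ univ), show univ.piecewise A B = A from piecewise_univ _ _]
    at h
  exact sub_eq_of_eq_add' h

theorem norm_det_add_sub_det_le [NormedCommRing R] [NormOneClass R]
    {A B : Matrix n n R} {a : n → ℝ} {ε : ℝ} (hε₀ : 0 ≤ ε) (hε₁ : ε ≤ 1)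
    (hA : ∀ i j, ‖A i j‖ ≤ a i) (hB : ∀ i j, ‖B i j‖ ≤ ε * a i) :
    ‖(A + B).det - A.det‖ ≤ 2 ^ Fintype.card n * (Fintype.card n).factorial * ε * ∏ i, a i := by
  have ha : ∀ i, 0 ≤ a i := fun i => (norm_nonneg _).trans (hA i i)
  have hterm : ∀ s ∈ univ.erase univ, ‖det (s.piecewise A B)‖ ≤
      (Fintype.card n).factorial * (ε * ∏ i, a i) := by
    intro s hs
    obtain ⟨k, hk⟩ : ∃ k, k ∉ s := by simpa [eq_univ_iff_forall] using ne_of_mem_erase hs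
    have hrow : ∀ i j,
        ‖s.piecewise A B i j‖ ≤ s.piecewise (fun _ => (1 : ℝ)) (fun _ => ε) i * a i := by
      intro i j
      by_cases hi : i ∈ s
      · rw [show s.piecewise A B i = A i from piecewise_eq_of_mem _ _ _ hi,
          piecewise_eq_of_mem _ _ _ hi, one_mul]
        exact hA i j
      · rw [show s.piecewise A B i = B i from piecewise_eq_of_notMem _ _ _ hi,
          piecewise_eq_of_notMem _ _ _ hi]
        exact hB i j
    refine (norm_det_le_factorial_mul_prod hrow).trans ?_
    gcongr
    rw [prod_mul_distrib]
    gcongr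
    · exact prod_nonneg fun i _ => ha i
    · rw [prod_piecewise, prod_const_one, one_mul, prod_const]
      exact pow_le_of_le_one hε₀ hε₁ (card_ne_zero.2 ⟨k, by simpa using hk⟩)
  calc ‖(A + B).det - A.det‖ ≤ ∑ s ∈ univ.erase univ, ‖det (s.piecewise A B)‖ := by
        rw [det_add_sub_det_eq_sum]; exact norm_sum_le _ _
    _ ≤ ∑ _s ∈ univ.erase univ, (Fintype.card n).factorial * (ε * ∏ i, a i) := sum_le_sum hterm
    _ ≤ ∑ _s : Finset n, (Fintype.card n).factorial * (ε * ∏ i, a i) :=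
        sum_le_sum_of_subset_of_nonneg (erase_subset _ _) fun _ _ _ => by
          have := prod_nonneg fun i (_ : i ∈ univ) => ha i; positivity
    _ = _ := by simp [Fintype.card_finset]; ring

end Matrix

section WronskianBlock

variable {R : Type*}

def wronskianBlock [Zero R] (u1L u1R u2L u2R d1L d1R d2L d2R : R) : Matrix (Fin 4) (Fin 4) R :=
  !![u1L, 0, u1R, 0; 0, u2L, 0, u2R; d1L, 0, d1R, 0; 0, d2L, 0, d2R]

theorem det_wronskianBlock [CommRing R] (u1L u1R u2L u2R d1L d1R d2L d2R : R) :
    (wronskianBlock u1L u1R u2L u2R d1L d1R d2L d2R).det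
      = (u1L * d1R - d1L * u1R) * (u2L * d2R - d2L * u2R) := by
  simp [wronskianBlock, Matrix.det_succ_row_zero, Fin.sum_univ_succ, Fin.succAbove]
  ring

theorem norm_wronskianBlock_le [NormedAddCommGroup R] {u1L u1R u2L u2R d1L d1R d2L d2R : R}
    {α β : ℝ} (hu1L : ‖u1L‖ ≤ α) (hu1R : ‖u1R‖ ≤ α) (hu2L : ‖u2L‖ ≤ α) (hu2R : ‖u2R‖ ≤ α)
    (hd1L : ‖d1L‖ ≤ β) (hd1R : ‖d1R‖ ≤ β) (hd2L : ‖d2L‖ ≤ β) (hd2R : ‖d2R‖ ≤ β) (i j : Fin 4) :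
    ‖wronskianBlock u1L u1R u2L u2R d1L d1R d2L d2R i j‖ ≤ ![α, α, β, β] i := by
  have hα : 0 ≤ α := (norm_nonneg _).trans hu1L
  have hβ : 0 ≤ β := (norm_nonneg _).trans hd1L
  fin_cases i <;> fin_cases j <;> simpa [wronskianBlock]

end WronskianBlock

open Real in
theorem stmt17_general (C : ℝ) :
    ∃ C' : ℝ, 0 ≤ C' ∧ ∀ h : ℝ, 0 < h → h ≤ 1 →
      ∀ u1L u1R u2L u2R d1L d1R d2L d2R : ℂ,
      ‖u1L‖ ≤ C * h ^ ((1 : ℝ) / 6) → ‖u1R‖ ≤ C * h ^ ((1 : ℝ) / 6) →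
      ‖u2L‖ ≤ C * h ^ ((1 : ℝ) / 6) → ‖u2R‖ ≤ C * h ^ ((1 : ℝ) / 6) →
      ‖d1L‖ ≤ C * h ^ (-(5 : ℝ) / 6) → ‖d1R‖ ≤ C * h ^ (-(5 : ℝ) / 6) →
      ‖d2L‖ ≤ C * h ^ (-(5 : ℝ) / 6) → ‖d2R‖ ≤ C * h ^ (-(5 : ℝ) / 6) →
      ∀ M R : Matrix (Fin 4) (Fin 4) ℂ,
      M = !![u1L, 0, u1R, 0; 0, u2L, 0, u2R; d1L, 0, d1R, 0; 0, d2L, 0, d2R] + R →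
      (∀ l : Fin 4, ‖R 0 l‖ ≤ C * h ^ ((1 : ℝ) / 3)) →
      (∀ l : Fin 4, ‖R 1 l‖ ≤ C * h ^ ((1 : ℝ) / 3)) →
      (∀ l : Fin 4, ‖R 2 l‖ ≤ C * h ^ (-(2 : ℝ) / 3)) →
      (∀ l : Fin 4, ‖R 3 l‖ ≤ C * h ^ (-(2 : ℝ) / 3)) →
      ‖M.det - (u1L * d1R - d1L * u1R) * (u2L * d2R - d2L * u2R)‖
        ≤ C' * h ^ (-(7 : ℝ) / 6) := by
  refine ⟨384 * C ^ 4, by positivity, ?_⟩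
  intro h hh0 hh1 u1L u1R u2L u2R d1L d1R d2L d2R hu1L hu1R hu2L hu2R hd1L hd1R hd2L hd2R
    M R hM hR0 hR1 hR2 hR3
  have hval : C * h ^ ((1 : ℝ) / 3) = h ^ ((1 : ℝ) / 6) * (C * h ^ ((1 : ℝ) / 6)) := by
    rw [mul_left_comm, ← rpow_add hh0]; norm_num
  have hder : C * h ^ (-(2 : ℝ) / 3) = h ^ ((1 : ℝ) / 6) * (C * h ^ (-(5 : ℝ) / 6)) := by
    rw [mul_left_comm, ← rpow_add hh0]; norm_num
  have hR : ∀ i l, ‖R i l‖ ≤ h ^ ((1 : ℝ) / 6) * ![C * h ^ ((1 : ℝ) / 6), C * h ^ ((1 : ℝ) / 6),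
      C * h ^ (-(5 : ℝ) / 6), C * h ^ (-(5 : ℝ) / 6)] i := by
    intro i l
    fin_cases i
    exacts [(hR0 l).trans_eq hval, (hR1 l).trans_eq hval, (hR2 l).trans_eq hder,
      (hR3 l).trans_eq hder]
  have hpow : h ^ ((1 : ℝ) / 6) * (h ^ ((1 : ℝ) / 6) * h ^ ((1 : ℝ) / 6) * h ^ (-(5 : ℝ) / 6)
      * h ^ (-(5 : ℝ) / 6)) = h ^ (-(7 : ℝ) / 6) := by
    simp only [← rpow_add hh0]; norm_num
  have hperturb := Matrix.norm_det_add_sub_det_le (rpow_nonneg hh0.le _)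
    (rpow_le_one hh0.le hh1 (by norm_num))
    (norm_wronskianBlock_le hu1L hu1R hu2L hu2R hd1L hd1R hd2L hd2R) hR
  rw [hM, ← det_wronskianBlock]
  refine hperturb.trans_eq ?_
  simp only [Fin.prod_univ_four, Fintype.card_fin, Matrix.cons_val, Nat.factorial]
  push_cast
  linear_combination (384 * C ^ 4) * hpow

/-- Determinant perturbation estimate for the 4×4 Wronskian matrix of the four constructed
solutions: with values of size `h^{1/6}`, derivatives of size `h^{−5/6}`, and error entries
of size `h^{1/3}` (value rows) and `h^{−2/3}` (derivative rows), the determinant equals the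
product of the two scalar 2×2 Wronskians up to `O(h^{−7/6})`. -/
theorem stmt17 (C : ℝ) (hC : 0 ≤ C) :
    ∃ C' : ℝ, 0 ≤ C' ∧ ∀ h : ℝ, 0 < h → h ≤ 1 →
      ∀ u1L u1R u2L u2R d1L d1R d2L d2R : ℂ,
      ‖u1L‖ ≤ C * h ^ ((1 : ℝ) / 6) → ‖u1R‖ ≤ C * h ^ ((1 : ℝ) / 6) →
      ‖u2L‖ ≤ C * h ^ ((1 : ℝ) / 6) → ‖u2R‖ ≤ C * h ^ ((1 : ℝ) / 6) →
      ‖d1L‖ ≤ C * h ^ (-(5 : ℝ) / 6) → ‖d1R‖ ≤ C * h ^ (-(5 : ℝ) / 6) →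
      ‖d2L‖ ≤ C * h ^ (-(5 : ℝ) / 6) → ‖d2R‖ ≤ C * h ^ (-(5 : ℝ) / 6) →
      ∀ M R : Matrix (Fin 4) (Fin 4) ℂ,
      M = !![u1L, 0, u1R, 0; 0, u2L, 0, u2R; d1L, 0, d1R, 0; 0, d2L, 0, d2R] + R →
      (∀ l : Fin 4, ‖R 0 l‖ ≤ C * h ^ ((1 : ℝ) / 3)) →
      (∀ l : Fin 4, ‖R 1 l‖ ≤ C * h ^ ((1 : ℝ) / 3)) →
      (∀ l : Fin 4, ‖R 2 l‖ ≤ C * h ^ (-(2 : ℝ) / 3)) →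
      (∀ l : Fin 4, ‖R 3 l‖ ≤ C * h ^ (-(2 : ℝ) / 3)) →
      ‖M.det - (u1L * d1R - d1L * u1R) * (u2L * d2R - d2L * u2R)‖
        ≤ C' * h ^ (-(7 : ℝ) / 6) :=
  stmt17_general C
end

section
/- For all positive constants c, C₁, M, K, C, D₁ there exist h₀ ∈ (0, 1] and C'' > 0, depending only on these constants, such that the following holds for every 0 < h ≤ h₀. Let J ⊆ ℝ be an interval and 𝒜 : J → ℝ be twice continuously differentiable with c ≤ 𝒜'(E) ≤ C₁ and |𝒜''(E)| ≤ M for all E ∈ J. Let e, E ∈ J satisfy cos(𝒜(e)/h) = 0, |E − e| ≤ K h^{3/2}, and cos²(𝒜(E)/h) = D h + ρ for some D ∈ [0, D₁] and ρ ∈ ℝ with |ρ| ≤ C h^{3/2}. Then | |E − e| − (√D / 𝒜'(e)) h^{3/2} | ≤ C'' h^{7/4}. -/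
/-!
Put `θ = (𝒜(E) − 𝒜(e))/h`. Since `cos(𝒜(e)/h) = 0`, the quantization condition becomes
`sin²θ = Dh + ρ`, and Taylor's formula gives `θh = 𝒜'(e)(E − e) + O(h³)`, so `θ = O(h^{1/2})`
and `sin²θ = θ² + O(h²)`. Hence `θ² = Dh + O(h^{3/2})`, and as `√` is `1/2`-Hölder,
`|θ| = √D h^{1/2} + O(h^{3/4})`; multiplying by `h` and dividing by `𝒜'(e) ≥ c` gives the claim.
All exponents become integral in `t = h^{1/4}`.
-/

open Set Real

lemma Real.abs_sin_sq_sub_sq_le (x : ℝ) : |sin x ^ 2 - x ^ 2| ≤ x ^ 4 := by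
  have hsub := abs_sub_sin_le x
  have hadd : |sin x + x| ≤ 2 * |x| :=
    (abs_add_le _ _).trans (by linarith [abs_sin_le_abs (x := x)])
  calc |sin x ^ 2 - x ^ 2| = |x - sin x| * |sin x + x| := by
        rw [abs_sub_comm, ← abs_mul]; ring_nf
    _ ≤ |x| ^ 3 / 6 * (2 * |x|) := mul_le_mul hsub hadd (abs_nonneg _) (by positivity)
    _ ≤ |x| ^ 4 := by nlinarith [pow_nonneg (abs_nonneg x) 4]
    _ = x ^ 4 := (even_two_mul 2).pow_abs x

lemma Real.cos_add_sq_of_cos_eq_zero {x : ℝ} (hx : cos x = 0) (y : ℝ) :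
    cos (x + y) ^ 2 = sin y ^ 2 := by
  have hsin := sin_sq_add_cos_sq x
  rw [hx] at hsin
  rw [cos_add, hx]
  linear_combination sin y ^ 2 * hsin

lemma Real.sqrt_add_le_sqrt_add_sqrt {x y : ℝ} (hx : 0 ≤ x) (hy : 0 ≤ y) :
    √(x + y) ≤ √x + √y :=
  sqrt_le_iff.mpr ⟨by positivity,
    by nlinarith [sq_sqrt hx, sq_sqrt hy, sqrt_nonneg x, sqrt_nonneg y]⟩

lemma Real.abs_sqrt_sub_sqrt_le {x y : ℝ} (hx : 0 ≤ x) (hy : 0 ≤ y) :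
    |√x - √y| ≤ √|x - y| := by
  have key : ∀ u v, 0 ≤ v → √u ≤ √v + √|u - v| := fun u v hv =>
    (sqrt_le_sqrt (by linarith [le_abs_self (u - v)])).trans
      (sqrt_add_le_sqrt_add_sqrt hv (abs_nonneg _))
  rw [abs_sub_le_iff]
  constructor
  · linarith [key x y hy]
  · linarith [abs_sub_comm y x ▸ key y x hx]

theorem Convex.abs_sub_sub_mul_sub_le {J : Set ℝ} (hJ : Convex ℝ J) {f f' f'' : ℝ → ℝ} {M : ℝ}
    (hf : ∀ x ∈ J, HasDerivWithinAt f (f' x) J x)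
    (hf' : ∀ x ∈ J, HasDerivWithinAt f' (f'' x) J x) (hM : ∀ x ∈ J, |f'' x| ≤ M)
    {a b : ℝ} (ha : a ∈ J) (hb : b ∈ J) :
    |f b - f a - f' a * (b - a)| ≤ M * (b - a) ^ 2 := by
  have hI : uIcc a b ⊆ J := hJ.ordConnected.uIcc_subset ha hb
  have hM₀ : 0 ≤ M := (abs_nonneg _).trans (hM a ha)
  have hf'_sub : ∀ x ∈ uIcc a b, ‖f' x - f' a‖ ≤ M * |b - a| := fun x hx =>
    calc ‖f' x - f' a‖ ≤ M * ‖x - a‖ :=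
          hJ.norm_image_sub_le_of_norm_hasDerivWithin_le hf' hM ha (hI hx)
      _ ≤ M * |b - a| := by gcongr; exact abs_sub_left_of_mem_uIcc hx
  have hg : ∀ x ∈ uIcc a b,
      HasDerivWithinAt (fun y => f y - f' a * y) (f' x - f' a) (uIcc a b) x := fun x hx =>
    ((hf x (hI hx)).mono hI).sub (by simpa using (hasDerivWithinAt_id x _).const_mul (f' a))
  have hmvt := (convex_uIcc a b).norm_image_sub_le_of_norm_hasDerivWithin_le hg hf'_sub
    left_mem_uIcc right_mem_uIcc
  calc |f b - f a - f' a * (b - a)| = ‖f b - f' a * b - (f a - f' a * a)‖ := by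
        rw [Real.norm_eq_abs]; ring_nf
    _ ≤ M * |b - a| * ‖b - a‖ := hmvt
    _ = M * (b - a) ^ 2 := by rw [Real.norm_eq_abs, mul_assoc, ← sq, sq_abs]

lemma Real.pow_four_rpow_natCast_div_four {t : ℝ} (ht : 0 ≤ t) (n : ℕ) :
    (t ^ 4) ^ ((n : ℝ) / 4) = t ^ n := by
  rw [← rpow_natCast t 4, ← rpow_mul ht,
    show ((4 : ℕ) : ℝ) * ((n : ℝ) / 4) = n by push_cast; ring, rpow_natCast]

theorem abs_abs_sub_sqrt_mul_sq_le {θ t L D C ρ : ℝ} (ht : 0 ≤ t) (ht1 : t ≤ 1)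
    (hθ : |θ| ≤ L * t ^ 2) (hD : 0 ≤ D) (hsin : sin θ ^ 2 = D * t ^ 4 + ρ)
    (hρ : |ρ| ≤ C * t ^ 6) :
    |(|θ|) - √D * t ^ 2| ≤ √(C + L ^ 4) * t ^ 3 := by
  have hθ4 : θ ^ 4 ≤ L ^ 4 * t ^ 6 :=
    calc θ ^ 4 = |θ| ^ 4 := ((even_two_mul 2).pow_abs θ).symm
      _ ≤ (L * t ^ 2) ^ 4 := pow_le_pow_left₀ (abs_nonneg θ) hθ 4
      _ = L ^ 4 * t ^ 6 * t ^ 2 := by ring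
      _ ≤ L ^ 4 * t ^ 6 := mul_le_of_le_one_right (by positivity) (pow_le_one₀ ht ht1)
  have hσ : |θ ^ 2 - D * t ^ 4| ≤ (C + L ^ 4) * t ^ 6 :=
    calc |θ ^ 2 - D * t ^ 4| = |ρ - (sin θ ^ 2 - θ ^ 2)| := by congr 1; linarith
      _ ≤ |ρ| + |sin θ ^ 2 - θ ^ 2| := abs_sub _ _
      _ ≤ C * t ^ 6 + L ^ 4 * t ^ 6 := add_le_add hρ ((abs_sin_sq_sub_sq_le θ).trans hθ4)
      _ = (C + L ^ 4) * t ^ 6 := by ring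
  calc |(|θ|) - √D * t ^ 2| = |√(θ ^ 2) - √(D * t ^ 4)| := by
        rw [sqrt_sq_eq_abs, sqrt_mul hD, show t ^ 4 = (t ^ 2) ^ 2 by ring,
          sqrt_sq (by positivity)]
    _ ≤ √|θ ^ 2 - D * t ^ 4| := abs_sqrt_sub_sqrt_le (sq_nonneg θ) (by positivity)
    _ ≤ √((C + L ^ 4) * t ^ 6) := sqrt_le_sqrt hσ
    _ = √(C + L ^ 4) * t ^ 3 := by
        rw [sqrt_mul' _ (by positivity), show t ^ 6 = (t ^ 3) ^ 2 by ring,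
          sqrt_sq (by positivity)]

theorem abs_abs_sub_sqrt_div_mul_pow_six_le {a c C₁ M K C d r θ t D ρ : ℝ} (hc : 0 < c)
    (hca : c ≤ a) (haC₁ : a ≤ C₁) (hM : 0 ≤ M) (ht : 0 < t) (ht1 : t ≤ 1)
    (hθ : θ * t ^ 4 = a * d + r) (hr : |r| ≤ M * d ^ 2) (hd : |d| ≤ K * t ^ 6)
    (hD : 0 ≤ D) (hsin : sin θ ^ 2 = D * t ^ 4 + ρ) (hρ : |ρ| ≤ C * t ^ 6) :
    |(|d|) - √D / a * t ^ 6| ≤ (√(C + (C₁ * K + M * K ^ 2) ^ 4) + M * K ^ 2) / c * t ^ 7 := by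
  set L := C₁ * K + M * K ^ 2
  have ha : 0 < a := hc.trans_le hca
  have hr' : |r| ≤ M * K ^ 2 * t ^ 12 :=
    calc |r| ≤ M * |d| ^ 2 := by rwa [sq_abs]
      _ ≤ M * (K * t ^ 6) ^ 2 := by gcongr
      _ = M * K ^ 2 * t ^ 12 := by ring
  have h12_6 : t ^ 12 ≤ t ^ 6 := pow_le_pow_of_le_one ht.le ht1 (by norm_num)
  have h12_7 : t ^ 12 ≤ t ^ 7 := pow_le_pow_of_le_one ht.le ht1 (by norm_num)
  have hθabs : |θ| * t ^ 4 = |a * d + r| := by rw [← hθ, abs_mul, abs_of_pos (pow_pos ht 4)]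
  have hθL : |θ| ≤ L * t ^ 2 := by
    refine le_of_mul_le_mul_right ?_ (by positivity : 0 < t ^ 4)
    calc |θ| * t ^ 4 = |a * d + r| := hθabs
      _ ≤ a * |d| + |r| := (abs_add_le _ _).trans_eq (by rw [abs_mul, abs_of_pos ha])
      _ ≤ C₁ * (K * t ^ 6) + M * K ^ 2 * t ^ 12 :=
          add_le_add (mul_le_mul haC₁ hd (abs_nonneg _) (ha.le.trans haC₁)) hr'
      _ ≤ L * t ^ 2 * t ^ 4 := by
          linarith [mul_le_mul_of_nonneg_left h12_6 (by positivity : 0 ≤ M * K ^ 2)]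
  have hθD := abs_abs_sub_sqrt_mul_sq_le ht.le ht1 hθL hD hsin hρ
  have had : |a * |d| - √D * t ^ 6| ≤ (√(C + L ^ 4) + M * K ^ 2) * t ^ 7 :=
    calc |a * |d| - √D * t ^ 6|
        = |(|a * d| - |a * d + r|) + (|θ| - √D * t ^ 2) * t ^ 4| := by
          rw [abs_mul a, abs_of_pos ha, ← hθabs]; ring_nf
      _ ≤ |(|a * d| - |a * d + r|)| + |(|θ| - √D * t ^ 2) * t ^ 4| := abs_add_le _ _
      _ ≤ |r| + √(C + L ^ 4) * t ^ 3 * t ^ 4 := by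
          refine add_le_add ?_ ?_
          · simpa using abs_abs_sub_abs_le_abs_sub (a * d) (a * d + r)
          · rw [abs_mul, abs_of_pos (pow_pos ht 4)]; gcongr
      _ ≤ (√(C + L ^ 4) + M * K ^ 2) * t ^ 7 := by
          linarith [mul_le_mul_of_nonneg_left h12_7 (by positivity : 0 ≤ M * K ^ 2)]
  calc |(|d|) - √D / a * t ^ 6| = |a * |d| - √D * t ^ 6| / a := by
        rw [show (|d|) - √D / a * t ^ 6 = (a * |d| - √D * t ^ 6) / a by field_simp,
          abs_div, abs_of_pos ha]
    _ ≤ (√(C + L ^ 4) + M * K ^ 2) * t ^ 7 / a := by gcongr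
    _ ≤ (√(C + L ^ 4) + M * K ^ 2) * t ^ 7 / c := by gcongr
    _ = (√(C + L ^ 4) + M * K ^ 2) / c * t ^ 7 := by ring

theorem stmt18_general (c C₁ M K C D₁ : ℝ) (hc : 0 < c) (hM : 0 < M) (hC : 0 < C) :
    ∃ h₀ ∈ Ioc (0 : ℝ) 1, ∃ C'' > 0, ∀ h : ℝ, 0 < h → h ≤ h₀ →
      ∀ J : Set ℝ, Convex ℝ J → ∀ A A' A'' : ℝ → ℝ,
      (∀ E ∈ J, HasDerivWithinAt A (A' E) J E) →
      (∀ E ∈ J, HasDerivWithinAt A' (A'' E) J E) →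
      ContinuousOn A'' J →
      (∀ E ∈ J, c ≤ A' E ∧ A' E ≤ C₁) →
      (∀ E ∈ J, |A'' E| ≤ M) →
      ∀ e E : ℝ, e ∈ J → E ∈ J →
      Real.cos (A e / h) = 0 →
      |E - e| ≤ K * h ^ ((3 : ℝ) / 2) →
      ∀ D ρ : ℝ, 0 ≤ D → D ≤ D₁ → |ρ| ≤ C * h ^ ((3 : ℝ) / 2) →
      Real.cos (A E / h) ^ 2 = D * h + ρ →
      |(|E - e|) - Real.sqrt D / A' e * h ^ ((3 : ℝ) / 2)| ≤ C'' * h ^ ((7 : ℝ) / 4) := by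
  refine ⟨1, ⟨one_pos, le_rfl⟩, (√(C + (C₁ * K + M * K ^ 2) ^ 4) + M * K ^ 2) / c,
    by positivity, ?_⟩
  intro h hh hh1 J hJ A A' A'' hA hA' _ hA'b hA''b e E he hE hcos hEe D ρ hD _ hρ heq
  obtain ⟨t, ht, rfl⟩ : ∃ t, 0 < t ∧ h = t ^ 4 := ⟨h ^ (1 / 4 : ℝ), by positivity, by
    rw [← rpow_natCast, ← rpow_mul hh.le]; norm_num⟩
  have ht1 : t ≤ 1 := (pow_le_one_iff_of_nonneg ht.le (by norm_num)).mp hh1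
  rw [show (3 : ℝ) / 2 = ((6 : ℕ) : ℝ) / 4 by norm_num, pow_four_rpow_natCast_div_four ht.le]
    at hEe hρ ⊢
  rw [show (7 : ℝ) / 4 = ((7 : ℕ) : ℝ) / 4 by norm_num, pow_four_rpow_natCast_div_four ht.le]
  have hθ : (A E - A e) / t ^ 4 * t ^ 4 = A' e * (E - e) + (A E - A e - A' e * (E - e)) := by
    field_simp; ring
  have hsin : sin ((A E - A e) / t ^ 4) ^ 2 = D * t ^ 4 + ρ := by
    rw [← heq, ← cos_add_sq_of_cos_eq_zero hcos]; ring_nf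
  exact abs_abs_sub_sqrt_div_mul_pow_six_le hc (hA'b e he).1 (hA'b e he).2 hM.le ht ht1 hθ
    (hJ.abs_sub_sub_mul_sub_le hA hA' hA''b he hE) hEe hD hsin hρ

/-- Solving the symmetric quantization condition `cos²(𝒜(E)/h) = Dh + ρ` near a
Bohr–Sommerfeld point `e` (with `cos(𝒜(e)/h) = 0`): any solution `E` with
`|E − e| ≤ Kh^{3/2}` satisfies `|E − e| = (√D/𝒜'(e))h^{3/2} + O(h^{7/4})`. -/
theorem stmt18 (c C₁ M K C D₁ : ℝ) (hc : 0 < c) (hC₁ : 0 < C₁) (hM : 0 < M)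
    (hK : 0 < K) (hC : 0 < C) (hD₁ : 0 < D₁) :
    ∃ h₀ ∈ Ioc (0 : ℝ) 1, ∃ C'' > 0, ∀ h : ℝ, 0 < h → h ≤ h₀ →
      ∀ J : Set ℝ, Convex ℝ J → ∀ A A' A'' : ℝ → ℝ,
      (∀ E ∈ J, HasDerivWithinAt A (A' E) J E) →
      (∀ E ∈ J, HasDerivWithinAt A' (A'' E) J E) →
      ContinuousOn A'' J →
      (∀ E ∈ J, c ≤ A' E ∧ A' E ≤ C₁) →
      (∀ E ∈ J, |A'' E| ≤ M) →
      ∀ e E : ℝ, e ∈ J → E ∈ J →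
      Real.cos (A e / h) = 0 →
      |E - e| ≤ K * h ^ ((3 : ℝ) / 2) →
      ∀ D ρ : ℝ, 0 ≤ D → D ≤ D₁ → |ρ| ≤ C * h ^ ((3 : ℝ) / 2) →
      Real.cos (A E / h) ^ 2 = D * h + ρ →
      |(|E - e|) - Real.sqrt D / A' e * h ^ ((3 : ℝ) / 2)| ≤ C'' * h ^ ((7 : ℝ) / 4) :=
  stmt18_general c C₁ M K C D₁ hc hM hC
end
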